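/- Let D be a digraph with χ⃗(D) ≥ 3 and let R ⊊ V(D) be such that D[R] is 2-dicolourable. Then for any 2-dicolouring φ of D[R], the digraph D/(R, φ, X) satisfies χ⃗(D/(R, φ, X)) ≥ 3. -/

import Mathlib

/-!
Basic theory of finite digraphs: a digraph has a finite vertex set and a
finite set of arcs (ordered pairs of distinct vertices).
-/

/-- A finite digraph on a vertex type `V`: a finite vertex set together with a
finite set of arcs, each arc being an ordered pair of distinct vertices. -/
structure Digraph' (V : Type*) where
  verts : Finset V
  arcs : Finset (V × V)
  wf : ∀ a ∈ arcs, a.1 ∈ verts ∧ a.2 ∈ verts ∧ a.1 ≠ a.2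

namespace Digraph'

variable {V : Type*} [DecidableEq V]

/-- The number of vertices of a digraph. -/
def n (D : Digraph' V) : ℕ := D.verts.card

/-- The number of arcs of a digraph. -/
def m (D : Digraph' V) : ℕ := D.arcs.card

/-- The set of consecutive (cyclically) pairs of a list, i.e. the arcs of the
directed cycle running through the list. -/
def cyclicArcs (c : List V) : Finset (V × V) := (c.zip (c.rotate 1)).toFinset

/-- The set of consecutive pairs of a list, i.e. the arcs of the directed path
running through the list. -/
def pathArcs (p : List V) : Finset (V × V) := (p.zip p.tail).toFinset

/-- The symmetric closure of a set of arcs. -/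
def symArcs (s : Finset (V × V)) : Finset (V × V) := s ∪ s.image Prod.swap

/-- The arcs of the bidirected path running through a list (each consecutive
pair is joined by a digon). -/
def pathDigonArcs (p : List V) : Finset (V × V) := symArcs (pathArcs p)

/-- `p` is the list of vertices of a path of odd length (an odd number of edges,
equivalently an even number of vertices) from `a` to `b`. -/
def IsOddBidirPathList (p : List V) (a b : V) : Prop :=
  p.Nodup ∧ Even p.length ∧ p.head? = some a ∧ p.getLast? = some b

/-- The subdigraph induced by `S` contains no directed cycle.  A directed cycle
is given by a nonempty list of at least two distinct vertices, each one having an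
arc towards the (cyclically) next one. -/
def AcyclicOn (D : Digraph' V) (S : Finset V) : Prop :=
  ¬ ∃ c : List V, c.Nodup ∧ 2 ≤ c.length ∧ (∀ v ∈ c, v ∈ S) ∧ cyclicArcs c ⊆ D.arcs

/-- `φ` is a `k`-dicolouring of `D`: every colour class induces an acyclic
subdigraph. -/
def IsDicolouring (D : Digraph' V) (k : ℕ) (φ : V → Fin k) : Prop :=
  ∀ i : Fin k, D.AcyclicOn (D.verts.filter fun v => φ v = i)

/-- `D` admits a `k`-dicolouring. -/
def Dicolourable (D : Digraph' V) (k : ℕ) : Prop :=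
  ∃ φ : V → Fin k, D.IsDicolouring k φ

/-- The dichromatic number of `D`: the least `k` such that `D` is
`k`-dicolourable. -/
noncomputable def dichromatic (D : Digraph' V) : ℕ := sInf {k | D.Dicolourable k}

/-- `H` is a subdigraph of `D`. -/
def IsSubdigraph (H D : Digraph' V) : Prop := H.verts ⊆ D.verts ∧ H.arcs ⊆ D.arcs

/-- `H` is a proper subdigraph of `D`. -/
def IsProperSubdigraph (H D : Digraph' V) : Prop :=
  H.IsSubdigraph D ∧ (H.verts ≠ D.verts ∨ H.arcs ≠ D.arcs)

/-- `D` is `k`-dicritical: its dichromatic number is `k` and every proper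
subdigraph has dichromatic number at most `k - 1`. -/
def Dicritical (k : ℕ) (D : Digraph' V) : Prop :=
  D.dichromatic = k ∧
    ∀ H : Digraph' V, H.IsProperSubdigraph D → H.dichromatic ≤ k - 1

/-- `D` is an oriented graph: it has no digon. -/
def Oriented (D : Digraph' V) : Prop := ∀ a ∈ D.arcs, (a.2, a.1) ∉ D.arcs

/-- There is a digon between `u` and `v` in `D`. -/
def HasDigon (D : Digraph' V) (u v : V) : Prop :=
  (u, v) ∈ D.arcs ∧ (v, u) ∈ D.arcs

/-- `u` and `v` are neighbours: there is at least one arc between them. -/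
def UAdj (D : Digraph' V) (u v : V) : Prop :=
  (u, v) ∈ D.arcs ∨ (v, u) ∈ D.arcs

/-- `M` is a matching of digons of `D` (a matching of the digon graph `B(D)`):
a set of digons of `D`, pairwise sharing no end-vertex. -/
def IsDigonMatching (D : Digraph' V) (M : Finset (V × V)) : Prop :=
  (∀ p ∈ M, D.HasDigon p.1 p.2) ∧
    ∀ p ∈ M, ∀ q ∈ M, p ≠ q → p.1 ≠ q.1 ∧ p.1 ≠ q.2 ∧ p.2 ≠ q.1 ∧ p.2 ≠ q.2

/-- `π(D)`: the maximum size of a matching of the digon graph `B(D)`. -/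
noncomputable def piNum (D : Digraph' V) : ℕ :=
  sSup {k | ∃ M : Finset (V × V), D.IsDigonMatching M ∧ M.card = k}

/-- The potential `ρ(D) = 7 n(D) - 3 m(D) - 2 π(D)`. -/
noncomputable def potential (D : Digraph' V) : ℤ :=
  7 * (D.n : ℤ) - 3 * (D.m : ℤ) - 2 * (D.piNum : ℤ)

/-- The subdigraph of `D` induced by `R`. -/
def induce (D : Digraph' V) (R : Finset V) : Digraph' V where
  verts := D.verts ∩ R
  arcs := D.arcs.filter fun a => a.1 ∈ R ∧ a.2 ∈ R
  wf := by
    intro a ha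
    rw [Finset.mem_filter] at ha
    obtain ⟨h, h1, h2⟩ := ha
    obtain ⟨hv1, hv2, hne⟩ := D.wf a h
    exact ⟨Finset.mem_inter.mpr ⟨hv1, h1⟩, Finset.mem_inter.mpr ⟨hv2, h2⟩, hne⟩

/-- The potential `ρ_D(R)` of a set of vertices `R` in `D`: the potential of the
subdigraph of `D` induced by `R`. -/
noncomputable def potentialOn (D : Digraph' V) (R : Finset V) : ℤ :=
  (D.induce R).potential

/-- The digraph obtained from `D` by deleting the arc `a`. -/
def eraseArc (D : Digraph' V) (a : V × V) : Digraph' V where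
  verts := D.verts
  arcs := D.arcs.erase a
  wf := fun b hb => D.wf b (Finset.mem_of_mem_erase hb)

/-- The digraph obtained from `D` by deleting the vertex `v`. -/
def delVert (D : Digraph' V) (v : V) : Digraph' V where
  verts := D.verts.erase v
  arcs := D.arcs.filter fun a => a.1 ≠ v ∧ a.2 ≠ v
  wf := by
    intro a ha
    rw [Finset.mem_filter] at ha
    obtain ⟨h, h1, h2⟩ := ha
    obtain ⟨hv1, hv2, hne⟩ := D.wf a h
    exact ⟨Finset.mem_erase.mpr ⟨h1, hv1⟩, Finset.mem_erase.mpr ⟨h2, hv2⟩, hne⟩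

/-- The degree of `v` in `D`: the number of arcs incident to `v`. -/
def degree (D : Digraph' V) (v : V) : ℕ :=
  (D.arcs.filter fun a => a.1 = v ∨ a.2 = v).card

/-- `D` is a bidirected odd cycle: obtained from an undirected cycle of odd
length (at least 3) by replacing every edge by a digon. -/
def IsBidirectedOddCycle (D : Digraph' V) : Prop :=
  ∃ c : List V, c.Nodup ∧ 3 ≤ c.length ∧ Odd c.length ∧
    D.verts = c.toFinset ∧ D.arcs = symArcs (cyclicArcs c)

/-- `H` is a bidirected odd cycle with one arc removed. -/
def IsBidirOddCycleMinusArc (H : Digraph' V) : Prop :=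
  ∃ (C : Digraph' V) (e : V × V), C.IsBidirectedOddCycle ∧ e ∈ C.arcs ∧
    H.verts = C.verts ∧ H.arcs = C.arcs.erase e

/-- `D` is an odd 3-wheel with center `c`: a vertex `c` joined to a directed
3-cycle `(x, y, z, x)` by three bidirected paths of odd length, pairwise
disjoint except in `c`. -/
def IsOdd3WheelWithCenter (D : Digraph' V) (c : V) : Prop :=
  ∃ (p₁ p₂ p₃ : List V) (x y z : V),
    IsOddBidirPathList p₁ c x ∧ IsOddBidirPathList p₂ c y ∧ IsOddBidirPathList p₃ c z ∧
    p₁.toFinset ∩ p₂.toFinset = {c} ∧ p₁.toFinset ∩ p₃.toFinset = {c} ∧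
    p₂.toFinset ∩ p₃.toFinset = {c} ∧
    D.verts = p₁.toFinset ∪ p₂.toFinset ∪ p₃.toFinset ∧
    D.arcs = pathDigonArcs p₁ ∪ pathDigonArcs p₂ ∪ pathDigonArcs p₃ ∪
      {(x, y), (y, z), (z, x)}

/-- `D` is an odd 3-wheel. -/
def IsOdd3Wheel (D : Digraph' V) : Prop := ∃ c : V, D.IsOdd3WheelWithCenter c

end Digraph'

/-!
If `ψ` were a 2-dicolouring of `D'`, then `ψ` composed with the contraction map would
2-dicolour `D`. A vertex set is acyclic iff each of its nonempty subsets has a sink, so it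
suffices that a monochromatic sinkless set `T` of `D` maps onto a monochromatic sinkless
set of `D'`. All of `T ∩ R` carries one `φ`-colour, because the digon `x₁x₂` forces
`ψ x₁ ≠ ψ x₂`; hence `T ∩ R` has a sink in `D[R]`, and its out-arc in `T` leaves `R` and
survives the contraction.
-/

theorem Function.periodicPts_nonempty {α : Type*} [Finite α] [Nonempty α] (f : α → α) :
    (Function.periodicPts f).Nonempty := by
  obtain ⟨m, n, hmn, heq⟩ :=
    Finite.exists_ne_map_eq_of_infinite fun k : ℕ => f^[k] (Classical.arbitrary α)
  wlog hlt : m < n generalizing m n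
  · exact this n m hmn.symm heq.symm (by omega)
  refine ⟨f^[m] (Classical.arbitrary α), n - m, by omega, ?_⟩
  change f^[n - m] (f^[m] _) = _
  rw [← Function.iterate_add_apply, Nat.sub_add_cancel hlt.le]
  exact heq.symm

namespace Digraph'

variable {V : Type*} [DecidableEq V] {D D' : Digraph' V}

theorem AcyclicOn.mono {S S' : Finset V} (h : D.AcyclicOn S') (hS : S ⊆ S') : D.AcyclicOn S :=
  fun ⟨c, hnd, hlen, hc, harcs⟩ => h ⟨c, hnd, hlen, fun v hv => hS (hc v hv), harcs⟩

/-- Following a chosen out-neighbour from each vertex of `T` eventually runs around a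
periodic orbit, which is a directed cycle. -/
theorem not_acyclicOn_of_forall_exists_arc {T : Finset V} (hne : T.Nonempty)
    (hT : ∀ v ∈ T, ∃ w ∈ T, (v, w) ∈ D.arcs) : ¬ D.AcyclicOn T := by
  choose s hsT hs using hT
  let g : T → T := fun v => ⟨s v v.2, hsT v v.2⟩
  have hg : ∀ v : T, ((v : V), (g v : V)) ∈ D.arcs := fun v => hs v v.2
  have : Nonempty T := hne.to_subtype
  obtain ⟨y, hy⟩ := Function.periodicPts_nonempty g
  have hp : 0 < Function.minimalPeriod g y := Function.minimalPeriod_pos_of_mem_periodicPts hy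
  have hp1 : Function.minimalPeriod g y ≠ 1 := by
    intro h1
    have hfix := (Function.isPeriodicPt_minimalPeriod g y).eq
    rw [h1, Function.iterate_one] at hfix
    exact (D.wf _ (hg y)).2.2 (by rw [hfix])
  have hsucc : ∀ k, g^[(k + 1) % Function.minimalPeriod g y] y = g (g^[k] y) := fun k => by
    rw [Function.iterate_mod_minimalPeriod_eq, Function.iterate_succ_apply']
  intro hac
  refine hac ⟨(List.range (Function.minimalPeriod g y)).map fun k => (g^[k] y : V), ?_,
    by simp; omega, ?_, ?_⟩
  · refine List.Nodup.map_on (fun k hk l hl hkl => ?_) List.nodup_range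
    exact Function.iterate_injOn_Iio_minimalPeriod (by simpa using hk) (by simpa using hl)
      (Subtype.val_injective hkl)
  · simp
  · intro a ha
    obtain ⟨k, hk, rfl⟩ := List.mem_iff_getElem.1 (List.mem_toFinset.1 ha)
    simp only [List.length_zip, List.length_map, List.length_rotate, List.length_range,
      min_self] at hk
    simpa [hsucc] using hg (g^[k] y)

theorem acyclicOn_iff_exists_sink {S : Finset V} :
    D.AcyclicOn S ↔ ∀ T ⊆ S, T.Nonempty → ∃ v ∈ T, ∀ w ∈ T, (v, w) ∉ D.arcs := by
  constructor
  · intro h T hTS hne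
    by_contra! hT
    exact not_acyclicOn_of_forall_exists_arc hne hT (h.mono hTS)
  · rintro h ⟨c, -, hlen, hcS, hc⟩
    obtain ⟨v, hv, hsink⟩ := h c.toFinset (fun v hv => hcS v (List.mem_toFinset.1 hv))
      (List.toFinset_nonempty_iff c |>.2 (List.ne_nil_of_length_pos (by omega)))
    obtain ⟨k, hk, rfl⟩ := List.mem_iff_getElem.1 (List.mem_toFinset.1 hv)
    have hk' : k < (c.rotate 1).length := by simpa using hk
    refine hsink _ (List.mem_toFinset.2 (List.mem_rotate.1 (List.getElem_mem hk'))) (hc ?_)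
    exact List.mem_toFinset.2 (List.mem_iff_getElem.2 ⟨k, by simpa using hk, by simp⟩)

theorem IsDicolouring.ne_of_hasDigon {k : ℕ} {ψ : V → Fin k} (hψ : D.IsDicolouring k ψ)
    {u v : V} (huv : D.HasDigon u v) : ψ u ≠ ψ v := by
  intro heq
  have hsub : {u, v} ⊆ D.verts.filter fun w => ψ w = ψ u := by
    intro w hw
    rcases Finset.mem_insert.1 hw with rfl | hw
    · exact Finset.mem_filter.2 ⟨(D.wf _ huv.1).1, rfl⟩
    · rw [Finset.mem_singleton.1 hw]
      exact Finset.mem_filter.2 ⟨(D.wf _ huv.1).2.1, heq.symm⟩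
  obtain ⟨w, hw, hsink⟩ :=
    acyclicOn_iff_exists_sink.1 (hψ (ψ u)) _ hsub (Finset.insert_nonempty _ _)
  simp only [Finset.mem_insert, Finset.mem_singleton] at hw
  rcases hw with rfl | rfl
  · exact hsink v (by simp) huv.1
  · exact hsink u (by simp) huv.2

theorem dicolourable_card_add_one (D : Digraph' V) : D.Dicolourable (D.verts.card + 1) := by
  refine ⟨fun v => ⟨D.verts.toList.idxOf v,
    Nat.lt_succ_of_le (D.verts.length_toList ▸ List.idxOf_le_length)⟩, fun i => ?_⟩
  refine acyclicOn_iff_exists_sink.2 fun T hT ⟨v, hv⟩ => ⟨v, hv, fun w hw hvw => ?_⟩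
  have hv' := Finset.mem_filter.1 (hT hv)
  have hw' := Finset.mem_filter.1 (hT hw)
  have hidx := congrArg Fin.val (hv'.2.trans hw'.2.symm)
  exact (D.wf _ hvw).2.2 ((List.idxOf_inj (Finset.mem_toList.2 hv'.1)).1 hidx)

theorem Dicolourable.mono {k l : ℕ} (h : D.Dicolourable k) (hkl : k ≤ l) :
    D.Dicolourable l := by
  obtain ⟨φ, hφ⟩ := h
  refine ⟨fun v => Fin.castLE hkl (φ v), fun i => ?_⟩
  refine acyclicOn_iff_exists_sink.2 fun T hT ⟨v, hv⟩ => ?_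
  refine acyclicOn_iff_exists_sink.1 (hφ (φ v)) T (fun w hw => ?_) ⟨v, hv⟩
  have hv' := Finset.mem_filter.1 (hT hv)
  have hw' := Finset.mem_filter.1 (hT hw)
  exact Finset.mem_filter.2 ⟨hw'.1, Fin.castLE_injective hkl (hw'.2.trans hv'.2.symm)⟩

theorem dichromatic_le_iff {k : ℕ} : D.dichromatic ≤ k ↔ D.Dicolourable k :=
  ⟨(Nat.sInf_mem (s := {k | D.Dicolourable k}) ⟨_, D.dicolourable_card_add_one⟩).mono,
    fun h => Nat.sInf_le h⟩

/-- The vertex map of `D/(R, φ, X)`. -/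
def contract (R : Finset V) (φ : V → Fin 2) (x₁ x₂ : V) (v : V) : V :=
  if v ∈ R then (if φ v = 0 then x₁ else x₂) else v

/-- The arcs of `D/(R, φ, X)`. -/
def contractArcs (D : Digraph' V) (R : Finset V) (φ : V → Fin 2) (x₁ x₂ : V) :
    Finset (V × V) :=
  (D.arcs.filter fun a => a.1 ∉ R ∧ a.2 ∉ R) ∪ {(x₁, x₂), (x₂, x₁)} ∪
    ((D.arcs.filter fun a => a.1 ∈ R ∧ a.2 ∉ R).image
      fun a => (if φ a.1 = 0 then x₁ else x₂, a.2)) ∪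
    ((D.arcs.filter fun a => a.1 ∉ R ∧ a.2 ∈ R).image
      fun a => (a.1, if φ a.2 = 0 then x₁ else x₂))

variable {R : Finset V} {φ : V → Fin 2} {x₁ x₂ : V}

theorem IsDicolouring.exists_sink_inter {k : ℕ} {c : V → Fin k}
    (hc : (D.induce R).IsDicolouring k c) {T : Finset V} (hT : T ⊆ D.verts) {v : V}
    (hv : v ∈ T ∩ R) (hcol : ∀ w ∈ T ∩ R, c w = c v) :
    ∃ v' ∈ T ∩ R, ∀ w ∈ T ∩ R, (v', w) ∉ D.arcs := by
  have hsub : T ∩ R ⊆ (D.induce R).verts.filter fun w => c w = c v := fun w hw =>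
    Finset.mem_filter.2 ⟨Finset.inter_subset_inter_right hT hw, hcol w hw⟩
  obtain ⟨v', hv', hsink⟩ := acyclicOn_iff_exists_sink.1 (hc (c v)) _ hsub ⟨v, hv⟩
  exact ⟨v', hv', fun w hw hvw => hsink w hw
    (Finset.mem_filter.2 ⟨hvw, (Finset.mem_inter.1 hv').2, (Finset.mem_inter.1 hw).2⟩)⟩

theorem contract_mem_contractArcs {a b : V} (hab : (a, b) ∈ D.arcs) (hR : ¬(a ∈ R ∧ b ∈ R)) :
    (contract R φ x₁ x₂ a, contract R φ x₁ x₂ b) ∈ D.contractArcs R φ x₁ x₂ := by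
  unfold contract contractArcs
  by_cases ha : a ∈ R <;> by_cases hb : b ∈ R
  · exact absurd ⟨ha, hb⟩ hR
  · simp only [if_pos ha, if_neg hb]
    exact Finset.mem_union_left _ <| Finset.mem_union_right _ <|
      Finset.mem_image_of_mem _ (Finset.mem_filter.2 ⟨hab, ha, hb⟩)
  · simp only [if_neg ha, if_pos hb]
    exact Finset.mem_union_right _ <|
      Finset.mem_image_of_mem _ (Finset.mem_filter.2 ⟨hab, ha, hb⟩)
  · simp only [if_neg ha, if_neg hb]
    exact Finset.mem_union_left _ <| Finset.mem_union_left _ <| Finset.mem_union_left _ <|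
      Finset.mem_filter.2 ⟨hab, ha, hb⟩

theorem contract_mem_verts (hverts : D.verts \ R ∪ {x₁, x₂} ⊆ D'.verts) {v : V}
    (hv : v ∈ D.verts) : contract R φ x₁ x₂ v ∈ D'.verts := by
  apply hverts
  unfold contract
  split_ifs <;> simp_all

theorem eq_of_comp_contract_eq {k : ℕ} {ψ : V → Fin k} (hψ : ψ x₁ ≠ ψ x₂) {v w : V}
    (hv : v ∈ R) (hw : w ∈ R) (h : ψ (contract R φ x₁ x₂ v) = ψ (contract R φ x₁ x₂ w)) :
    φ v = φ w := by
  unfold contract at h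
  simp only [if_pos hv, if_pos hw] at h
  generalize φ v = a at h ⊢
  generalize φ w = b at h ⊢
  fin_cases a <;> fin_cases b <;> simp_all [eq_comm]

theorem IsDicolouring.comp_contract {k : ℕ} {ψ : V → Fin k} (hψ : D'.IsDicolouring k ψ)
    (hverts : D.verts \ R ∪ {x₁, x₂} ⊆ D'.verts) (harcs : D.contractArcs R φ x₁ x₂ ⊆ D'.arcs)
    (hφ : (D.induce R).IsDicolouring 2 φ) :
    D.IsDicolouring k (ψ ∘ contract R φ x₁ x₂) := by
  set f := contract R φ x₁ x₂
  have hψx : ψ x₁ ≠ ψ x₂ := hψ.ne_of_hasDigon ⟨harcs (by simp [contractArcs]),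
    harcs (by simp [contractArcs])⟩
  intro i
  refine acyclicOn_iff_exists_sink.2 fun T hT hne => ?_
  by_contra! hout
  have hTi : ∀ v ∈ T, v ∈ D.verts ∧ ψ (f v) = i := fun v hv => Finset.mem_filter.1 (hT hv)
  have hsinkR : ∀ v ∈ T, v ∈ R → ∃ v' ∈ T, v' ∈ R ∧ f v' = f v ∧ ∀ w ∈ T, w ∈ R →
      (v', w) ∉ D.arcs := by
    intro v hv hvR
    have hcol : ∀ w ∈ T ∩ R, φ w = φ v := fun w hw =>
      eq_of_comp_contract_eq hψx (Finset.mem_inter.1 hw).2 hvR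
        ((hTi w (Finset.mem_inter.1 hw).1).2.trans (hTi v hv).2.symm)
    obtain ⟨v', hv', hsink⟩ := hφ.exists_sink_inter (fun w hw => (hTi w hw).1)
      (Finset.mem_inter.2 ⟨hv, hvR⟩) hcol
    obtain ⟨hv'T, hv'R⟩ := Finset.mem_inter.1 hv'
    refine ⟨v', hv'T, hv'R, ?_, fun w hw hwR => hsink w (Finset.mem_inter.2 ⟨hw, hwR⟩)⟩
    simp only [f, contract, if_pos hv'R, if_pos hvR, hcol v' hv']
  have hexit : ∀ v ∈ T, ∃ v' ∈ T, ∃ w ∈ T,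
      f v' = f v ∧ (v', w) ∈ D.arcs ∧ ¬(v' ∈ R ∧ w ∈ R) := by
    intro v hv
    by_cases hvR : v ∈ R
    · obtain ⟨v', hv'T, hv'R, hfv', hsink⟩ := hsinkR v hv hvR
      obtain ⟨w, hwT, hvw⟩ := hout v' hv'T
      exact ⟨v', hv'T, w, hwT, hfv', hvw, fun h => hsink w hwT h.2 hvw⟩
    · obtain ⟨w, hwT, hvw⟩ := hout v hv
      exact ⟨v, hv, w, hwT, rfl, hvw, fun h => hvR h.1⟩
  have himage : T.image f ⊆ D'.verts.filter fun u => ψ u = i := fun u hu => by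
    obtain ⟨v, hv, rfl⟩ := Finset.mem_image.1 hu
    exact Finset.mem_filter.2 ⟨contract_mem_verts hverts (hTi v hv).1, (hTi v hv).2⟩
  obtain ⟨u, hu, hsink⟩ := acyclicOn_iff_exists_sink.1 (hψ i) _ himage (hne.image f)
  obtain ⟨v, hv, rfl⟩ := Finset.mem_image.1 hu
  obtain ⟨v', -, w, hwT, hfv', hvw, hR⟩ := hexit v hv
  exact hsink (f w) (Finset.mem_image_of_mem f hwT)
    (hfv' ▸ harcs (contract_mem_contractArcs hvw hR))

end Digraph'

open Digraph' in
theorem contraction_dichromatic_ge_three_general {V : Type*} [DecidableEq V]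
    (D D' : Digraph' V) (R : Finset V) (φ : V → Fin 2) (x₁ x₂ : V)
    (hchi : 3 ≤ D.dichromatic)
    (hφ : (D.induce R).IsDicolouring 2 φ)
    (hverts : D'.verts = (D.verts \ R) ∪ {x₁, x₂})
    (harcs : D'.arcs =
      (D.arcs.filter fun a => a.1 ∉ R ∧ a.2 ∉ R) ∪ {(x₁, x₂), (x₂, x₁)} ∪
        ((D.arcs.filter fun a => a.1 ∈ R ∧ a.2 ∉ R).image
          fun a => (if φ a.1 = 0 then x₁ else x₂, a.2)) ∪
        ((D.arcs.filter fun a => a.1 ∉ R ∧ a.2 ∈ R).image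
          fun a => (a.1, if φ a.2 = 0 then x₁ else x₂))) :
    3 ≤ D'.dichromatic := by
  by_contra! hlt
  obtain ⟨ψ, hψ⟩ := dichromatic_le_iff.1 (Nat.le_of_lt_succ hlt)
  have hD : D.dichromatic ≤ 2 :=
    dichromatic_le_iff.2 ⟨_, hψ.comp_contract hverts.ge harcs.ge hφ⟩
  omega

open Digraph' in
/-- Let `D` be a digraph with `χ⃗(D) ≥ 3` and `R ⊊ V(D)` with
`D[R]` 2-dicolourable. For any 2-dicolouring `φ` of `D[R]`, the digraph
`D' = D/(R, φ, X)` — obtained by contracting each colour class `φ⁻¹(i)` into a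
new vertex `xᵢ`, adding a digon between `x₁` and `x₂`, and removing loops and
multiple arcs — satisfies `χ⃗(D') ≥ 3`. -/
theorem contraction_dichromatic_ge_three {V : Type*} [DecidableEq V]
    (D D' : Digraph' V) (R : Finset V) (φ : V → Fin 2) (x₁ x₂ : V)
    (hchi : 3 ≤ D.dichromatic)
    (hR : R ⊆ D.verts) (hRproper : R ≠ D.verts)
    (hφ : (D.induce R).IsDicolouring 2 φ)
    (hx₁ : x₁ ∉ D.verts) (hx₂ : x₂ ∉ D.verts) (hx : x₁ ≠ x₂)
    (hverts : D'.verts = (D.verts \ R) ∪ {x₁, x₂})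
    (harcs : D'.arcs =
      (D.arcs.filter fun a => a.1 ∉ R ∧ a.2 ∉ R) ∪ {(x₁, x₂), (x₂, x₁)} ∪
        ((D.arcs.filter fun a => a.1 ∈ R ∧ a.2 ∉ R).image
          fun a => (if φ a.1 = 0 then x₁ else x₂, a.2)) ∪
        ((D.arcs.filter fun a => a.1 ∉ R ∧ a.2 ∈ R).image
          fun a => (a.1, if φ a.2 = 0 then x₁ else x₂))) :
    3 ≤ D'.dichromatic :=
  contraction_dichromatic_ge_three_general D D' R φ x₁ x₂ hchi hφ hverts harcs
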